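/- The endomorphism A = S ∘ ⋀^n(J_{2n}) of ⋀^n(ℂ^{2n}) satisfies A ∘ A = id, and the matrix of A in the ordered basis {e_I} is symmetric (equal to its own transpose). -/

import Mathlib

open Matrix

/-- The set of `n`-element subsets of `{1, …, 2n}` (realized as `Fin (2*n)`), indexing the
standard basis `e_I = e_{i₁} ∧ ⋯ ∧ e_{iₙ}` of the `n`-th exterior power `⋀ⁿ(ℂ^{2n})`. -/
abbrev Idx (n : ℕ) := {I : Finset (Fin (2 * n)) // I.card = n}

/-- The matrix of the induced linear map `⋀ⁿ(g)` on `⋀ⁿ(ℂ^{2n})` in the standard basis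
`{e_I}`: its `(I, J)` entry is the `n × n` minor of `g` with rows `I` and columns `J`
(both taken in increasing order), i.e. the coefficient of `e_I` in `⋀ⁿ(g)(e_J)`. -/
noncomputable def wedgePow (n : ℕ) (g : Matrix (Fin (2 * n)) (Fin (2 * n)) ℂ) :
    Matrix (Idx n) (Idx n) ℂ := fun I J =>
  Matrix.det (Matrix.of fun a b : Fin n =>
    g ((I.1.orderIsoOfFin I.2 a).1) ((J.1.orderIsoOfFin J.2 b).1))

/-- `qCoeff n I J = q(e_I, e_J)`, the coefficient of `e_1 ∧ ⋯ ∧ e_{2n}` in `e_I ∧ e_J`: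
it is `0` unless `J = Iᶜ`, in which case it is the sign `(-1)^{#{(i,j) ∈ I × J : i > j}}`
obtained by sorting the concatenation of the increasing enumerations of `I` and `J`. -/
noncomputable def qCoeff (n : ℕ) (I J : Idx n) : ℂ :=
  if (J : Finset (Fin (2 * n))) = (I : Finset (Fin (2 * n)))ᶜ then
    (-1 : ℂ) ^ (((I.1 ×ˢ J.1).filter fun p => p.2 < p.1).card)
  else 0

/-- The bilinear form `q` on `⋀ⁿ(ℂ^{2n})` defined by `v ∧ w = q(v, w) • e_1 ∧ ⋯ ∧ e_{2n}`,
written in coordinates with respect to the basis `{e_I}` (a vector of `⋀ⁿ(ℂ^{2n})` is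
recorded by its coordinate function `Idx n → ℂ`). -/
noncomputable def q (n : ℕ) (v w : Idx n → ℂ) : ℂ :=
  ∑ I : Idx n, ∑ J : Idx n, v I * w J * qCoeff n I J

/-- The basis vector `e_I` of `⋀ⁿ(ℂ^{2n})`, in coordinates. -/
noncomputable def eVec (n : ℕ) (I : Idx n) : Idx n → ℂ :=
  fun J => if J = I then 1 else 0

/-- The complement `Iᶜ` of an `n`-element subset of `{1, …, 2n}`. -/
def complIdx (n : ℕ) (I : Idx n) : Idx n :=
  ⟨(I : Finset (Fin (2 * n)))ᶜ, by
    rw [Finset.card_compl, I.2, Fintype.card_fin]; omega⟩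

/-- The matrix (in the basis `{e_I}`) of the linear map `S` on `⋀ⁿ(ℂ^{2n})` defined by
`S(e_I) = q(e_{Iᶜ}, e_I) • e_{Iᶜ}`. -/
noncomputable def Smat (n : ℕ) : Matrix (Idx n) (Idx n) ℂ := fun I J =>
  if I = complIdx n J then qCoeff n (complIdx n J) J else 0

/-- The `n × n` matrix `w_n` with entries `1` at positions `(i, n+1-i)` and `0` elsewhere. -/
noncomputable def wnMat (n : ℕ) : Matrix (Fin n) (Fin n) ℂ := fun i j =>
  if (i : ℕ) + (j : ℕ) + 1 = n then 1 else 0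

/-- The `2n × 2n` matrix `J_{2n}` with block form `[[0, wₙ], [-wₙ, 0]]`. -/
noncomputable def JMat (n : ℕ) : Matrix (Fin (2 * n)) (Fin (2 * n)) ℂ :=
  Matrix.reindex (finSumFinEquiv.trans (finCongr (by omega)))
    (finSumFinEquiv.trans (finCongr (by omega)))
    (Matrix.fromBlocks 0 (wnMat n) (-(wnMat n)) 0)

/-- The matrix of the endomorphism `A = S ∘ ⋀ⁿ(J_{2n})` of `⋀ⁿ(ℂ^{2n})`. -/
noncomputable def Amat (n : ℕ) : Matrix (Idx n) (Idx n) ℂ :=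
  Smat n * wedgePow n (JMat n)

/-!
`⋀ⁿ(J_{2n})` sends `e_J` to `± e_{rev J}`, where `rev` is `i ↦ 2n+1-i`: the only nonzero
minor in column `J` of the anti-diagonal matrix `J_{2n}` is the one in rows `rev J`, and it
equals `sign(rev on Fin n) · (-1)^{#(J ∩ {1,…,n})}`. Then `S` sends `e_{rev J}` to
`± e_{(rev J)ᶜ}`, so `A` is a signed permutation matrix for the involution `J ↦ J* = (rev J)ᶜ`.
Its two entries `A(J*, J)` and `A(J, J*)` agree, because `q(e_{rev I}, e_{rev J}) = q(e_J, e_I)`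
and `#(J* ∩ {1,…,n}) = #(J ∩ {1,…,n})`, and each is a product of signs; hence `A` is symmetric
and `A² = 1`.
-/

namespace Matrix

variable {ι R : Type*} [DecidableEq ι] {τ : ι → ι}

theorem mul_self_eq_one_of_eq_zero_off_involution [Fintype ι] [NonAssocSemiring R]
    {M : Matrix ι ι R} (hτ : Function.Involutive τ) (hM : ∀ I J, I ≠ τ J → M I J = 0)
    (h : ∀ J, M J (τ J) * M (τ J) J = 1) : M * M = 1 := by
  ext I J
  rw [mul_apply, Finset.sum_eq_single (τ J) (fun K _ hK => by rw [hM K J hK, mul_zero])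
    (by simp), one_apply]
  by_cases hIJ : I = J
  · rw [if_pos hIJ, hIJ, h]
  · rw [if_neg hIJ, hM I (τ J) (by rwa [hτ J]), zero_mul]

theorem transpose_eq_self_of_eq_zero_off_involution [Zero R] {M : Matrix ι ι R}
    (hτ : Function.Involutive τ) (hM : ∀ I J, I ≠ τ J → M I J = 0)
    (h : ∀ J, M J (τ J) = M (τ J) J) : Mᵀ = M := by
  ext I J
  rw [transpose_apply]
  by_cases hIJ : I = τ J
  · rw [hIJ, h]
  · rw [hM I J hIJ, hM J I (fun hJI => hIJ (by rw [hJI, hτ I]))]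

end Matrix

theorem JMat_apply (n : ℕ) (i j : Fin (2 * n)) :
    JMat n i j = if i = Fin.rev j then (if (j : ℕ) < n then -1 else 1) else 0 := by
  obtain ⟨k, rfl⟩ := (finSumFinEquiv.trans (finCongr (two_mul n).symm)).surjective i
  obtain ⟨l, rfl⟩ := (finSumFinEquiv.trans (finCongr (two_mul n).symm)).surjective j
  simp only [JMat, reindex_apply, submatrix_apply, Equiv.symm_apply_apply]
  rcases k with k | k <;> rcases l with l | l <;> have := k.isLt <;> have := l.isLt <;>
    simp [wnMat, Fin.ext_iff, Fin.val_rev] <;> (try split_ifs) <;> first | omega | simp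

section Indices

variable {n : ℕ}

def revIdx (n : ℕ) (I : Idx n) : Idx n :=
  ⟨I.1.map Fin.revPerm.toEmbedding, by rw [Finset.card_map, I.2]⟩

def dualIdx (n : ℕ) (J : Idx n) : Idx n :=
  complIdx n (revIdx n J)

@[simp]
theorem mem_revIdx (I : Idx n) (x : Fin (2 * n)) : x ∈ (revIdx n I).1 ↔ x.rev ∈ I.1 := by
  simp [revIdx, Finset.mem_map_equiv]

@[simp]
theorem coe_complIdx (I : Idx n) : (complIdx n I).1 = I.1ᶜ :=
  rfl

theorem revIdx_involutive : Function.Involutive (revIdx n) := fun I =>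
  Subtype.ext <| Finset.ext fun x => by simp

theorem complIdx_complIdx (I : Idx n) : complIdx n (complIdx n I) = I :=
  Subtype.ext <| compl_compl I.1

theorem revIdx_complIdx (I : Idx n) : revIdx n (complIdx n I) = complIdx n (revIdx n I) :=
  Subtype.ext <| Finset.ext fun x => by simp

theorem revIdx_dualIdx (J : Idx n) : revIdx n (dualIdx n J) = complIdx n J := by
  rw [dualIdx, ← revIdx_complIdx, revIdx_involutive]

theorem dualIdx_involutive : Function.Involutive (dualIdx n) := fun J => by
  rw [dualIdx, revIdx_dualIdx, complIdx_complIdx]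

theorem orderEmbOfFin_revIdx (J : Idx n) (a : Fin n) :
    (revIdx n J).1.orderEmbOfFin (revIdx n J).2 a = (J.1.orderEmbOfFin J.2 a.rev).rev := by
  refine (congrFun (Finset.orderEmbOfFin_unique (revIdx n J).2
    (f := fun a => (J.1.orderEmbOfFin J.2 a.rev).rev) (fun a => ?_) fun a b hab => ?_) a).symm
  · simp [Finset.orderEmbOfFin_mem]
  · exact Fin.rev_lt_rev.mpr ((J.1.orderEmbOfFin J.2).strictMono (Fin.rev_lt_rev.mpr hab))

end Indices

section Wedge

open Finset

variable {n : ℕ}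

theorem wedgePow_JMat_eq_zero {I J : Idx n} (h : I ≠ revIdx n J) :
    wedgePow n (JMat n) I J = 0 := by
  obtain ⟨i, hiI, hiJ⟩ : ∃ i ∈ I.1, i ∉ (revIdx n J).1 := not_subset.mp fun hsub =>
    h (Subtype.ext (eq_of_subset_of_card_le hsub (by rw [I.2, (revIdx n J).2])))
  refine det_eq_zero_of_row_eq_zero ((I.1.orderIsoOfFin I.2).symm ⟨i, hiI⟩) fun b => ?_
  rw [of_apply, OrderIso.apply_symm_apply, JMat_apply, if_neg]
  rintro rfl
  exact hiJ ((mem_revIdx _ _).mpr (by simp))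

def lowCount (n : ℕ) (J : Idx n) : ℕ :=
  #(J.1.filter fun j : Fin (2 * n) => (j : ℕ) < n)

theorem wedgePow_JMat_revIdx (J : Idx n) :
    wedgePow n (JMat n) (revIdx n J) J
      = ((Equiv.Perm.sign (Fin.revPerm : Equiv.Perm (Fin n)) : ℤ) : ℂ) *
        (-1) ^ lowCount n J := by
  set d : Fin (2 * n) → ℂ := fun j => if (j : ℕ) < n then -1 else 1
  have hminor : (of fun a b : Fin n => JMat n ((revIdx n J).1.orderIsoOfFin (revIdx n J).2 a)
      (J.1.orderIsoOfFin J.2 b)) = (diagonal fun b => d (J.1.orderEmbOfFin J.2 b)).submatrix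
        Fin.revPerm id := by
    ext a b
    simp only [of_apply, coe_orderIsoOfFin_apply, orderEmbOfFin_revIdx, JMat_apply,
      submatrix_apply, diagonal_apply, id_eq, Fin.revPerm_apply, Fin.rev_inj,
      (J.1.orderEmbOfFin J.2).injective.eq_iff]
    split_ifs <;> simp_all [d]
  have hprod : ∏ b, d (J.1.orderEmbOfFin J.2 b) = (-1) ^ lowCount n J := calc
    _ = ∏ j : J.1, d j := Fintype.prod_equiv (J.1.orderIsoOfFin J.2).toEquiv _ _ fun _ => rfl
    _ = (-1) ^ lowCount n J := by
      rw [prod_coe_sort, prod_ite, prod_const, prod_const, one_pow, mul_one, lowCount]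
  rw [wedgePow, hminor, det_permute, det_diagonal, hprod]

end Wedge

section Signs

open Finset

variable {n : ℕ}

theorem lowCount_revIdx_add (K : Idx n) : lowCount n (revIdx n K) + lowCount n K = n := by
  have hrev : lowCount n (revIdx n K) = #(K.1.filter fun j : Fin (2 * n) => ¬ (j : ℕ) < n) := by
    refine card_nbij' Fin.rev Fin.rev (fun j hj => ?_) (fun j hj => ?_) (fun j _ => j.rev_rev)
      (fun j _ => j.rev_rev) <;>
    simp only [coe_filter, Set.mem_ofPred_eq, mem_revIdx, Fin.val_rev, Fin.rev_rev] at hj ⊢ <;>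
    exact ⟨hj.1, by omega⟩
  rw [hrev, lowCount, add_comm, card_filter_add_card_filter_not, K.2]

theorem lowCount_complIdx_add (K : Idx n) : lowCount n (complIdx n K) + lowCount n K = n := by
  rw [lowCount, lowCount, ← card_union_of_disjoint (disjoint_filter_filter disjoint_compl_left),
    ← filter_union, coe_complIdx, union_comm, union_compl, Fin.card_filter_val_lt]
  omega

theorem lowCount_dualIdx (J : Idx n) : lowCount n (dualIdx n J) = lowCount n J := by
  have := lowCount_complIdx_add (revIdx n J)
  have := lowCount_revIdx_add J
  rw [dualIdx]
  omega

theorem qCoeff_revIdx (I J : Idx n) : qCoeff n (revIdx n I) (revIdx n J) = qCoeff n J I := by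
  have hcompl : (revIdx n J).1 = (revIdx n I).1ᶜ ↔ I.1 = J.1ᶜ := calc
    _ ↔ revIdx n J = revIdx n (complIdx n I) := by rw [revIdx_complIdx, Subtype.ext_iff]; rfl
    _ ↔ J.1 = I.1ᶜ := revIdx_involutive.injective.eq_iff.trans Subtype.ext_iff
    _ ↔ I.1 = J.1ᶜ := eq_compl_comm
  have hcount : #(((revIdx n I).1 ×ˢ (revIdx n J).1).filter fun p => p.2 < p.1)
      = #((J.1 ×ˢ I.1).filter fun p => p.2 < p.1) := by
    refine card_nbij' (fun p => (p.2.rev, p.1.rev)) (fun p => (p.2.rev, p.1.rev))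
      (fun p hp => ?_) (fun p hp => ?_) (fun p _ => by simp) (fun p _ => by simp) <;>
    simp_all [Fin.rev_lt_rev]
  simp only [qCoeff, hcompl, hcount]

end Signs

section Amat

variable {n : ℕ}

theorem Amat_apply (I J : Idx n) :
    Amat n I J = Smat n I (complIdx n I) * wedgePow n (JMat n) (complIdx n I) J := by
  refine (mul_apply ..).trans (Finset.sum_eq_single _ (fun K _ hK => ?_) (by simp))
  rw [Smat, if_neg fun h => hK (by rw [h, complIdx_complIdx]), zero_mul]

theorem Amat_eq_zero_of_ne_dualIdx {I J : Idx n} (h : I ≠ dualIdx n J) : Amat n I J = 0 := by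
  rw [Amat_apply, wedgePow_JMat_eq_zero fun h' => h (by rw [dualIdx, ← h', complIdx_complIdx]),
    mul_zero]

theorem Amat_dualIdx (J : Idx n) :
    Amat n (dualIdx n J) J = qCoeff n J (complIdx n J) *
      (((Equiv.Perm.sign (Fin.revPerm : Equiv.Perm (Fin n)) : ℤ) : ℂ) *
        (-1) ^ lowCount n J) := by
  rw [Amat_apply, dualIdx, complIdx_complIdx, Smat, if_pos rfl, ← revIdx_complIdx, qCoeff_revIdx,
    wedgePow_JMat_revIdx]

theorem Amat_dualIdx_symm (J : Idx n) : Amat n J (dualIdx n J) = Amat n (dualIdx n J) J := by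
  have h := Amat_dualIdx (dualIdx n J)
  rw [dualIdx_involutive] at h
  rw [h, Amat_dualIdx, lowCount_dualIdx, dualIdx, complIdx_complIdx, ← revIdx_complIdx,
    qCoeff_revIdx]

theorem Amat_dualIdx_sq (J : Idx n) : Amat n (dualIdx n J) J ^ 2 = 1 := by
  have hneg (k : ℕ) : ((-1 : ℂ) ^ k) ^ 2 = 1 := by
    rw [← pow_mul, pow_mul', neg_one_sq, one_pow]
  have hsign (σ : Equiv.Perm (Fin n)) : ((σ.sign : ℤ) : ℂ) ^ 2 = 1 := by
    rw [← Int.cast_pow, ← Units.val_pow_eq_pow_val, Int.units_sq, Units.val_one, Int.cast_one]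
  rw [Amat_dualIdx, mul_pow, mul_pow, qCoeff, if_pos (coe_complIdx J), hneg, hsign, hneg, one_mul,
    one_mul]

end Amat

theorem Amat_sq_and_symm_general (n : ℕ) :
    Amat n * Amat n = 1 ∧ (Amat n)ᵀ = Amat n :=
  ⟨mul_self_eq_one_of_eq_zero_off_involution dualIdx_involutive
      (fun _ _ => Amat_eq_zero_of_ne_dualIdx) fun J => by
        rw [Amat_dualIdx_symm, ← sq, Amat_dualIdx_sq],
    transpose_eq_self_of_eq_zero_off_involution dualIdx_involutive
      (fun _ _ => Amat_eq_zero_of_ne_dualIdx) Amat_dualIdx_symm⟩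

/-- The endomorphism `A = S ∘ ⋀ⁿ(J_{2n})` of `⋀ⁿ(ℂ^{2n})` satisfies `A ∘ A = id`, and its
matrix in the ordered basis `{e_I}` is symmetric. -/
theorem Amat_sq_and_symm (n : ℕ) (hn : 1 ≤ n) :
    Amat n * Amat n = 1 ∧ (Amat n)ᵀ = Amat n :=
  Amat_sq_and_symm_general n
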